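/- arXiv:1805.05204 — 3 statements merged into one kernel-verified Lean document; each statement's English description precedes it below -/
import Mathlib

section
/- Let T be a tree of order n ≥ 3 and let 𝒢 be any Abelian group of order at least 4. Then there exists an edge labeling f: E(T) → 𝒢 \ {0} such that w(u) ≠ w(v) for every edge uv of T, where w(v) is the sum in 𝒢 of labels of edges incident to v. -/
/-
Root the tree at a leaf and let `u` be the neighbour, closer to the root, of a vertex farthest
from it. All neighbours of `u` except one, `q`, are then leaves; call them `L`. Label `T - L` by
induction (arbitrarily if only `u` and `q` remain). There `u` is a leaf, so its weight is the
label `W ≠ 0` of `uq`. Relabel the edges `uℓ`, `ℓ ∈ L`, by nonzero `x ℓ` so that the new weight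
`W + ∑ x` of `u` differs from the weight of `q` and from each `x ℓ`, the weight of `ℓ`. In a group
of order at least `4` this is done by taking all `x ℓ` but one equal to some `t ≠ 0` with
`(|L| - 1) • t + W ≠ 0`, and the last one outside three forbidden values.
-/

open Finset

lemma exists_ne_ne_ne_of_four_le_card {α : Type*} [Fintype α] (hα : 4 ≤ Fintype.card α)
    (a b c : α) : ∃ y, y ≠ a ∧ y ≠ b ∧ y ≠ c := by
  classical
  obtain ⟨y, -, hy⟩ := exists_mem_notMem_of_card_lt_card (s := {a, b, c}) (t := univ)
    (by rw [card_univ]; exact card_le_three.trans_lt (by omega))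
  simp only [mem_insert, mem_singleton, not_or] at hy
  exact ⟨y, hy⟩

section Group

variable {𝒢 : Type*} [AddCommGroup 𝒢] [Fintype 𝒢]

lemma exists_ne_zero_nsmul_add_ne_zero (hcard : 4 ≤ Fintype.card 𝒢) (m : ℕ) {W : 𝒢}
    (hW : W ≠ 0) : ∃ t ≠ (0 : 𝒢), m • t + W ≠ 0 := by
  by_contra! h
  obtain ⟨t, ht, -, -⟩ := exists_ne_ne_ne_of_four_le_card hcard 0 0 0
  obtain ⟨t', ht', htt', -⟩ := exists_ne_ne_ne_of_four_le_card hcard 0 (-t) 0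
  have hsum : t + t' ≠ 0 := fun h => htt' (eq_neg_of_add_eq_zero_right h)
  apply hW
  calc W = (m • t + W) + (m • t' + W) - (m • (t + t') + W) := by rw [nsmul_add]; abel
    _ = 0 := by rw [h t ht, h t' ht', h _ hsum, sub_zero, add_zero]

lemma exists_star_labels (hcard : 4 ≤ Fintype.card 𝒢) {α : Type*} {s : Finset α}
    (hs : s.Nonempty) {W : 𝒢} (hW : W ≠ 0) (c : 𝒢) :
    ∃ x : α → 𝒢, (∀ i ∈ s, x i ≠ 0) ∧ (∀ i ∈ s, W + ∑ j ∈ s, x j ≠ x i) ∧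
      W + ∑ j ∈ s, x j ≠ c := by
  classical
  obtain ⟨i₀, hi₀⟩ := hs
  obtain ⟨t, ht, htW⟩ := exists_ne_zero_nsmul_add_ne_zero hcard #(s.erase i₀) hW
  obtain ⟨y, hy, hyt, hyc⟩ := exists_ne_ne_ne_of_four_le_card hcard 0
    (t - (#(s.erase i₀) • t + W)) (c - (#(s.erase i₀) • t + W))
  have hsum : W + ∑ j ∈ s, (if j = i₀ then y else t) = y + (#(s.erase i₀) • t + W) := by
    rw [← add_sum_erase s _ hi₀, if_pos rfl,
      sum_congr rfl fun j hj => if_neg (ne_of_mem_erase hj), sum_const]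
    abel
  refine ⟨fun j => if j = i₀ then y else t, fun j _ => ?_, fun j _ => ?_, ?_⟩
  · dsimp only
    split_ifs <;> assumption
  · rw [hsum]
    dsimp only
    split_ifs
    · simpa using htW
    · exact fun h => hyt (eq_sub_of_add_eq h)
  · rw [hsum]
    exact fun h => hyc (eq_sub_of_add_eq h)

end Group

namespace SimpleGraph

variable {V : Type*} {G : SimpleGraph V}

section Tree

lemma Connected.exists_adj_dist_add_one (hG : G.Connected) {r x : V} (hx : r ≠ x) :
    ∃ y, G.Adj y x ∧ G.dist r y + 1 = G.dist r x := by
  obtain ⟨p, -, hp⟩ := hG.exists_path_of_dist r x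
  have hnil : ¬p.Nil := Walk.not_nil_of_ne hx
  refine ⟨p.penultimate, p.adj_penultimate hnil, ?_⟩
  have hle : G.dist r p.penultimate ≤ p.dropLast.length := dist_le _
  have hlen := p.length_dropLast_add_one hnil
  rcases (p.adj_penultimate hnil).diff_dist_adj (u := r) with h | h | h <;> omega

lemma IsTree.eq_of_adj_of_dist_add_one (hG : G.IsTree) (r : V) {x y₁ y₂ : V}
    (h₁ : G.Adj y₁ x) (h₂ : G.Adj y₂ x) (hd₁ : G.dist r y₁ + 1 = G.dist r x)
    (hd₂ : G.dist r y₂ + 1 = G.dist r x) : y₁ = y₂ := by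
  have shortest : ∀ {y} (h : G.Adj y x), G.dist r y + 1 = G.dist r x →
      ∃ p : G.Walk r x, p.IsPath ∧ p.penultimate = y := by
    intro y h hd
    obtain ⟨p, -, hp⟩ := hG.connected.exists_path_of_dist r y
    exact ⟨p.concat h, (p.concat h).isPath_of_length_eq_dist (by rw [Walk.length_concat, hp, hd]),
      p.penultimate_concat h⟩
  obtain ⟨p₁, hp₁, rfl⟩ := shortest h₁ hd₁
  obtain ⟨p₂, hp₂, rfl⟩ := shortest h₂ hd₂
  rw [(hG.existsUnique_path r x).unique hp₁ hp₂]

lemma IsTree.exists_pendant_star [Fintype V] (hG : G.IsTree) (h3 : 3 ≤ Fintype.card V) :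
    ∃ u q v, G.Adj u q ∧ G.Adj u v ∧ v ≠ q ∧ ∀ x, G.Adj u x → x ≠ q → ∀ y, G.Adj x y → y = u := by
  classical
  have : Nontrivial V := Fintype.one_lt_card_iff_nontrivial.mp (by omega)
  obtain ⟨r, hr⟩ := hG.exists_vert_degree_one_of_nontrivial
  obtain ⟨r', -, hr'⟩ := degree_eq_one_iff_existsUnique_adj.mp hr
  obtain ⟨v, -, hv⟩ := exists_max_image univ (G.dist r) univ_nonempty
  have hD : 2 ≤ G.dist r v := by
    by_contra! hD
    have hsub : univ ⊆ {r, r'} := fun x _ => by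
      have hx := (hv x (mem_univ x)).trans (Nat.lt_succ_iff.mp hD)
      rcases Nat.le_one_iff_eq_zero_or_eq_one.mp hx with h | h
      · simp [(hG.connected.dist_eq_zero_iff.mp h).symm]
      · simp [hr' x (dist_eq_one_iff_adj.mp h)]
    have := (card_le_card hsub).trans card_le_two
    rw [card_univ] at this
    omega
  obtain ⟨u, huv, hu⟩ := hG.connected.exists_adj_dist_add_one (r := r) (x := v)
    (by rintro rfl; simp at hD)
  obtain ⟨q, hqu, hq⟩ := hG.connected.exists_adj_dist_add_one (r := r) (x := u)
    (by rintro rfl; simp at hu; omega)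
  refine ⟨u, q, v, hqu.symm, huv, by rintro rfl; omega, fun x hux hxq y hxy => ?_⟩
  have hx : G.dist r x = G.dist r u + 1 := by
    rcases hG.dist_eq_dist_add_one_of_adj r hux with h | h
    · exact absurd (hG.eq_of_adj_of_dist_add_one r hux.symm hqu h.symm hq) hxq
    · exact h
  rcases hG.dist_eq_dist_add_one_of_adj r hxy with h | h
  · exact hG.eq_of_adj_of_dist_add_one r hxy.symm hux h.symm (by omega)
  · have := hv y (mem_univ y)
    omega

lemma IsTree.induce_of_subsingleton_neighborSet (hG : G.IsTree) {s : Set V} (hs : s.Nonempty)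
    (hleaf : ∀ v ∉ s, (G.neighborSet v).Subsingleton) : (G.induce s).IsTree :=
  ⟨(connected_iff _).mpr ⟨hG.connected.preconnected.induce_of_degree_eq_one hleaf, hs.to_subtype⟩,
    hG.isAcyclic.induce s⟩

end Tree

section Labeling

variable {𝒢 : Type*} [AddCommGroup 𝒢]

-- Edge labels are a symmetric function on pairs of vertices, nonzero exactly on the edges, so
-- that the weight of a vertex can be summed over all vertices.
structure IsNonzeroEdgeLabeling (G : SimpleGraph V) (f : V → V → 𝒢) : Prop where
  symm : ∀ a b, f a b = f b a
  ne_zero_iff : ∀ a b, f a b ≠ 0 ↔ G.Adj a b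

lemma exists_isNonzeroEdgeLabeling {a : 𝒢} (ha : a ≠ 0) (G : SimpleGraph V) :
    ∃ f : V → V → 𝒢, G.IsNonzeroEdgeLabeling f := by
  classical
  exact ⟨fun x y => if G.Adj x y then a else 0,
    ⟨fun x y => by simp only [G.adj_comm], fun x y => by split_ifs <;> simp_all⟩⟩

def extendLabeling (s : Set V) [DecidablePred (· ∈ s)] (f : s → s → 𝒢) (a b : V) : 𝒢 :=
  if ha : a ∈ s then if hb : b ∈ s then f ⟨a, ha⟩ ⟨b, hb⟩ else 0 else 0

variable {s : Set V} [DecidablePred (· ∈ s)]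

lemma IsNonzeroEdgeLabeling.extendLabeling_symm {f : s → s → 𝒢}
    (hf : (G.induce s).IsNonzeroEdgeLabeling f) (a b : V) :
    extendLabeling s f a b = extendLabeling s f b a := by
  unfold extendLabeling
  split_ifs <;> first | rfl | exact hf.symm _ _

lemma IsNonzeroEdgeLabeling.extendLabeling_ne_zero_iff {f : s → s → 𝒢}
    (hf : (G.induce s).IsNonzeroEdgeLabeling f) (a b : V) :
    extendLabeling s f a b ≠ 0 ↔ a ∈ s ∧ b ∈ s ∧ G.Adj a b := by
  unfold extendLabeling
  split_ifs with ha hb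
  · simp [ha, hb, hf.ne_zero_iff]
  · simp [hb]
  · simp [ha]

def starLabeling [DecidableEq V] (u : V) (L : Finset V) (x : V → 𝒢) (a b : V) : 𝒢 :=
  if a = u ∧ b ∈ L then x b else if b = u ∧ a ∈ L then x a else 0

lemma starLabeling_symm [DecidableEq V] (u : V) (L : Finset V) (x : V → 𝒢) (a b : V) :
    starLabeling u L x a b = starLabeling u L x b a := by
  unfold starLabeling
  split_ifs <;> grind

variable [Fintype V]

def labelWeight (f : V → V → 𝒢) (v : V) : 𝒢 := ∑ x, f v x

structure IsProperEdgeLabeling (G : SimpleGraph V) (f : V → V → 𝒢) : Prop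
    extends G.IsNonzeroEdgeLabeling f where
  labelWeight_ne : ∀ a b, G.Adj a b → labelWeight f a ≠ labelWeight f b

variable {f g : V → V → 𝒢}

lemma IsNonzeroEdgeLabeling.labelWeight_eq_sum_neighborFinset [DecidableRel G.Adj]
    (hf : G.IsNonzeroEdgeLabeling f) (v : V) :
    labelWeight f v = ∑ x ∈ G.neighborFinset v, f v x := by
  refine (sum_subset (subset_univ _) fun x _ hx => ?_).symm
  by_contra h
  exact hx ((G.mem_neighborFinset v x).mpr ((hf.ne_zero_iff v x).mp h))

lemma labelWeight_add (f g : V → V → 𝒢) (v : V) :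
    labelWeight (f + g) v = labelWeight f v + labelWeight g v :=
  sum_add_distrib

lemma labelWeight_extendLabeling (f : s → s → 𝒢) (a : s) :
    labelWeight (extendLabeling s f) a = labelWeight f a := by
  unfold labelWeight
  refine sum_congr_set s (extendLabeling s f a) (f a) (fun x hx => ?_) fun x hx => ?_ <;>
    simp [extendLabeling, hx]

section Star

variable [DecidableEq V] {u : V} {L : Finset V} (x : V → 𝒢)

lemma labelWeight_starLabeling_of_ne_of_notMem {a : V} (hau : a ≠ u) (haL : a ∉ L) :
    labelWeight (starLabeling u L x) a = 0 :=
  sum_eq_zero fun b _ => by simp [starLabeling, hau, haL]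

lemma labelWeight_starLabeling_self (huL : u ∉ L) :
    labelWeight (starLabeling u L x) u = ∑ ℓ ∈ L, x ℓ := by
  simp [labelWeight, starLabeling, huL]

lemma labelWeight_starLabeling_of_mem (huL : u ∉ L) {ℓ : V} (hℓ : ℓ ∈ L) :
    labelWeight (starLabeling u L x) ℓ = x ℓ := by
  have hℓu : ℓ ≠ u := by rintro rfl; exact huL hℓ
  simp [labelWeight, starLabeling, hℓu, hℓ]

end Star

variable [Fintype 𝒢]

theorem exists_isProperEdgeLabeling_of_pendant_star [DecidableEq V]
    (hcard : 4 ≤ Fintype.card 𝒢) {u q : V} {L : Finset V} (huq : G.Adj u q)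
    (hL : ∀ x, x ∈ L ↔ G.Adj u x ∧ x ≠ q) (hLne : L.Nonempty)
    (hleaf : ∀ ℓ ∈ L, ∀ y, G.Adj ℓ y → y = u) (hg_symm : ∀ a b, g a b = g b a)
    (hg_ne : ∀ a b, g a b ≠ 0 ↔ a ∉ L ∧ b ∉ L ∧ G.Adj a b)
    (hg_w : ∀ a b, a ≠ u → b ≠ u → a ∉ L → b ∉ L → G.Adj a b →
      labelWeight g a ≠ labelWeight g b) :
    ∃ f : V → V → 𝒢, G.IsProperEdgeLabeling f := by
  have huL : u ∉ L := fun h => G.irrefl ((hL u).1 h).1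
  have hqL : q ∉ L := fun h => ((hL q).1 h).2 rfl
  have hg_L : ∀ a b, a ∈ L ∨ b ∈ L → g a b = 0 := fun a b h => by
    by_contra hab
    have := (hg_ne a b).1 hab
    tauto
  obtain ⟨x, hx0, hx_leaf, hx_q⟩ :=
    exists_star_labels hcard hLne ((hg_ne u q).2 ⟨huL, hqL, huq⟩) (labelWeight g q)
  set f := g + starLabeling u L x
  have hw_centre : labelWeight f u = g u q + ∑ ℓ ∈ L, x ℓ := by
    rw [labelWeight_add, labelWeight_starLabeling_self x huL]
    congr 1
    refine sum_eq_single q (fun b _ hbq => ?_) (by simp)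
    by_contra h
    obtain ⟨-, hbL, hub⟩ := (hg_ne u b).1 h
    exact hbL ((hL b).2 ⟨hub, hbq⟩)
  have hw_leaf : ∀ ℓ ∈ L, labelWeight f ℓ = x ℓ := fun ℓ hℓ => by
    rw [labelWeight_add, labelWeight_starLabeling_of_mem x huL hℓ,
      show labelWeight g ℓ = 0 from sum_eq_zero fun b _ => hg_L ℓ b (.inl hℓ), zero_add]
  have hw_out : ∀ a, a ≠ u → a ∉ L → labelWeight f a = labelWeight g a := fun a hau haL => by
    rw [labelWeight_add, labelWeight_starLabeling_of_ne_of_notMem x hau haL, add_zero]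
  have hw_centre_ne : ∀ b, G.Adj u b → labelWeight f u ≠ labelWeight f b := fun b hub => by
    rw [hw_centre]
    by_cases hbq : b = q
    · subst hbq
      rwa [hw_out b huq.ne' hqL]
    · have hbL := (hL b).2 ⟨hub, hbq⟩
      rw [hw_leaf b hbL]
      exact hx_leaf b hbL
  refine ⟨f, ⟨fun a b => ?_, fun a b => ?_⟩, fun a b hab => ?_⟩
  · simp only [f, Pi.add_apply, hg_symm a b, starLabeling_symm u L x a b]
  · simp only [f, Pi.add_apply, starLabeling]
    by_cases hpend : a = u ∧ b ∈ L ∨ b = u ∧ a ∈ L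
    · rw [hg_L a b (by tauto), zero_add]
      rcases hpend with ⟨rfl, hb⟩ | ⟨rfl, ha⟩
      · simp [hb, hx0 b hb, ((hL b).1 hb).1]
      · simp [ha, huL, hx0 a ha, ((hL a).1 ha).1.symm]
    · rw [if_neg (by tauto), if_neg (by tauto), add_zero, hg_ne]
      refine ⟨fun h => h.2.2, fun h => ⟨fun ha => ?_, fun hb => ?_, h⟩⟩
      · exact hpend (.inr ⟨hleaf a ha b h, ha⟩)
      · exact hpend (.inl ⟨hleaf b hb a h.symm, hb⟩)
  · by_cases hau : a = u
    · subst hau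
      exact hw_centre_ne b hab
    by_cases hbu : b = u
    · subst hbu
      exact (hw_centre_ne a hab.symm).symm
    have haL : a ∉ L := fun h => hbu (hleaf a h b hab)
    have hbL : b ∉ L := fun h => hau (hleaf b h a hab.symm)
    rw [hw_out a hau haL, hw_out b hbu hbL]
    exact hg_w a b hau hbu haL hbL hab

theorem IsTree.exists_isProperEdgeLabeling (hG : G.IsTree) (h3 : 3 ≤ Fintype.card V)
    (hcard : 4 ≤ Fintype.card 𝒢) :
    ∃ f : V → V → 𝒢, G.IsProperEdgeLabeling f := by
  induction hn : Fintype.card V using Nat.strong_induction_on generalizing V with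
  | _ n ih =>
  classical
  obtain ⟨u, q, v, huq, huv, hvq, hpend⟩ := hG.exists_pendant_star h3
  set L : Finset V := {x | G.Adj u x ∧ x ≠ q}
  have hL : ∀ x, x ∈ L ↔ G.Adj u x ∧ x ≠ q := by simp [L]
  have hleaf : ∀ ℓ ∈ L, ∀ y, G.Adj ℓ y → y = u := fun ℓ hℓ =>
    hpend ℓ ((hL ℓ).1 hℓ).1 ((hL ℓ).1 hℓ).2
  let s : Set V := {x | x ∉ L}
  have huL : u ∉ L := fun h => G.irrefl ((hL u).1 h).1
  have hvL : v ∈ L := (hL v).2 ⟨huv, hvq⟩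
  obtain ⟨f', hf', hf'_w⟩ : ∃ f' : s → s → 𝒢, (G.induce s).IsNonzeroEdgeLabeling f' ∧
      ∀ a b : s, (a : V) ≠ u → (b : V) ≠ u → (G.induce s).Adj a b →
        labelWeight f' a ≠ labelWeight f' b := by
    have hG' : (G.induce s).IsTree := hG.induce_of_subsingleton_neighborSet ⟨u, huL⟩
      fun ℓ hℓ y hy z hz =>
        (hleaf ℓ (not_not.mp hℓ) y hy).trans (hleaf ℓ (not_not.mp hℓ) z hz).symm
    by_cases h3' : 3 ≤ Fintype.card s
    · obtain ⟨f', hf'⟩ := ih _ (hn ▸ Fintype.card_subtype_lt (not_not_intro hvL)) hG' h3' rfl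
      exact ⟨f', hf'.toIsNonzeroEdgeLabeling, fun a b _ _ => hf'.labelWeight_ne a b⟩
    · -- only `u` and `q` are left, so every edge meets `u`
      obtain ⟨c, hc, -, -⟩ := exists_ne_ne_ne_of_four_le_card hcard 0 0 0
      obtain ⟨f', hf'⟩ := exists_isNonzeroEdgeLabeling hc (G.induce s)
      refine ⟨f', hf', fun a b ha hb hab => absurd ?_ h3'⟩
      have hu : ⟨u, huL⟩ ≠ a := fun h => ha (congrArg Subtype.val h).symm
      have hu' : ⟨u, huL⟩ ≠ b := fun h => hb (congrArg Subtype.val h).symm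
      exact (card_eq_three.mpr ⟨_, _, _, hu, hu', hab.ne, rfl⟩).symm.le.trans (card_le_univ _)
  exact exists_isProperEdgeLabeling_of_pendant_star hcard huq hL ⟨v, hvL⟩ hleaf
    hf'.extendLabeling_symm hf'.extendLabeling_ne_zero_iff
    fun a b ha hb haL hbL hab => by
      rw [labelWeight_extendLabeling f' ⟨a, haL⟩, labelWeight_extendLabeling f' ⟨b, hbL⟩]
      exact hf'_w _ _ ha hb hab

end Labeling

end SimpleGraph

theorem stmt_8_general {V : Type} [Fintype V]
    (T : SimpleGraph V) [DecidableRel T.Adj] (htree : T.IsTree)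
    (hord : 3 ≤ Fintype.card V)
    (𝒢 : Type) [AddCommGroup 𝒢] [Fintype 𝒢] (hcard : 4 ≤ Fintype.card 𝒢) :
    ∃ f : V → V → 𝒢,
      (∀ u v, f u v = f v u) ∧
      (∀ u v, T.Adj u v → f u v ≠ 0) ∧
      (∀ u v, T.Adj u v →
        (∑ x ∈ T.neighborFinset u, f u x) ≠ (∑ x ∈ T.neighborFinset v, f v x)) := by
  obtain ⟨f, hf⟩ := htree.exists_isProperEdgeLabeling hord hcard
  refine ⟨f, hf.symm, fun u v h => (hf.ne_zero_iff u v).2 h, fun u v h => ?_⟩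
  rw [← hf.labelWeight_eq_sum_neighborFinset, ← hf.labelWeight_eq_sum_neighborFinset]
  exact hf.labelWeight_ne u v h

/-- For every tree `T` of order `n ≥ 3` and Abelian group `𝒢` of order at
least 4, there is a labeling of the edges of `T` with nonzero elements of `𝒢` such that
adjacent vertices receive distinct induced weights. -/
theorem stmt_8 {V : Type} [Fintype V] [DecidableEq V]
    (T : SimpleGraph V) [DecidableRel T.Adj] (htree : T.IsTree)
    (hord : 3 ≤ Fintype.card V)
    (𝒢 : Type) [AddCommGroup 𝒢] [Fintype 𝒢] (hcard : 4 ≤ Fintype.card 𝒢) :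
    ∃ f : V → V → 𝒢,
      (∀ u v, f u v = f v u) ∧
      (∀ u v, T.Adj u v → f u v ≠ 0) ∧
      (∀ u v, T.Adj u v →
        (∑ x ∈ T.neighborFinset u, f u x) ≠ (∑ x ∈ T.neighborFinset v, f v x)) :=
  stmt_8_general T htree hord 𝒢 hcard
end

section
/- If T is a tree of order n ≥ 3, then the nowhere-zero group sum chromatic number satisfies (χ^Σ_g)*(T) ≤ 4, and this bound is sharp: there exists a tree of order at least 3 (e.g. the symmetric double star with 5 edges) that admits no nowhere-zero vertex-coloring ℤ₃-labeling. -/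
set_option linter.unusedSectionVars false
set_option maxHeartbeats 1000000

/-- Edge list of the symmetric double star with 5 edges: centers `0, 1`, leaves `2, 3`
attached to `0` and leaves `4, 5` attached to `1`. -/
def dsEdges : List (Fin 6 × Fin 6) := [(0, 1), (0, 2), (0, 3), (1, 4), (1, 5)]

/-- The symmetric double star with 5 edges. -/
def doubleStar : SimpleGraph (Fin 6) where
  Adj u v := (u, v) ∈ dsEdges ∨ (v, u) ∈ dsEdges
  symm := by first | (constructor; decide) | (intro u v h; revert u v h; decide) | decide
  loopless := by first | (constructor; decide) | (intro u h; revert u h; decide) | decide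

instance : DecidableRel doubleStar.Adj := fun u v =>
  inferInstanceAs (Decidable ((u, v) ∈ dsEdges ∨ (v, u) ∈ dsEdges))

namespace Stmt9Aux
open SimpleGraph Walk

section GroupLemmas
variable {𝒢 : Type} [AddCommGroup 𝒢] [Fintype 𝒢]

lemma avoid3 (h4 : 4 ≤ Fintype.card 𝒢) (z1 z2 z3 : 𝒢) :
    ∃ x : 𝒢, x ≠ z1 ∧ x ≠ z2 ∧ x ≠ z3 := by
  classical
  by_contra h
  push_neg at h
  have hsub : (Finset.univ : Finset 𝒢) ⊆ {z1, z2, z3} := by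
    intro x _
    rcases eq_or_ne x z1 with rfl | h1
    · simp
    rcases eq_or_ne x z2 with rfl | h2
    · simp
    have := h x h1 h2
    simp [this]
  have := Finset.card_le_card hsub
  have h3 : ({z1, z2, z3} : Finset 𝒢).card ≤ 3 := by
    apply le_trans (Finset.card_insert_le _ _)
    have := Finset.card_insert_le z2 ({z3} : Finset 𝒢)
    simp at this ⊢
    omega
  rw [Finset.card_univ] at this
  omega


lemma three_distinct (h4 : 4 ≤ Fintype.card 𝒢) :
    ∃ a b c : 𝒢, a ≠ 0 ∧ b ≠ 0 ∧ c ≠ 0 ∧ a ≠ b ∧ a ≠ c ∧ b ≠ c := by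
  obtain ⟨a, ha, -, -⟩ := avoid3 h4 0 0 0
  obtain ⟨b, hb, hba, -⟩ := avoid3 h4 0 a a
  obtain ⟨c, hc, hca, hcb⟩ := avoid3 h4 0 a b
  exact ⟨a, b, c, ha, hb, hc, hba.symm, hca.symm, hcb.symm⟩


lemma exists_smul_ne (h4 : 4 ≤ Fintype.card 𝒢) {s : 𝒢} (hs : s ≠ 0) (m : ℕ) :
    ∃ a : 𝒢, a ≠ 0 ∧ s + m • a ≠ 0 := by
  by_contra h
  push_neg at h
  have key : ∀ a : 𝒢, a ≠ 0 → m • a = -s := by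
    intro a ha
    have := h a ha
    linear_combination (norm := abel1) this
  obtain ⟨a, b, c, ha, hb, hc, hab, hac, hbc⟩ := three_distinct h4
  have main : ∀ p q : 𝒢, p ≠ 0 → q ≠ 0 → p + q ≠ 0 → False := by
    intro p q hp hq hpq
    have h1 := key p hp
    have h2 := key q hq
    have h3 := key _ hpq
    rw [smul_add, h1, h2] at h3
    have hs0 : s = 0 := by linear_combination (norm := abel1) - h3
    exact hs hs0
  by_cases hab0 : a + b = 0
  · by_cases hac0 : a + c = 0
    · apply hbc
      have : b = -a := by linear_combination (norm := abel1) hab0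
      have h2 : c = -a := by linear_combination (norm := abel1) hac0
      rw [this, h2]
    · exact main a c ha hc hac0
  · exact main a b ha hb hab0


lemma keyChoice (h4 : 4 ≤ Fintype.card 𝒢) {V : Type} [DecidableEq V]
    (S L : Finset V) (hS : S.Nonempty) (hLS : L ⊆ S) (s F : 𝒢)
    (hs : s ≠ 0 ∨ L = ∅) :
    ∃ x : V → 𝒢, (∀ v ∈ S, x v ≠ 0) ∧ (∀ v ∉ S, x v = 0) ∧
      (s + ∑ v ∈ S, x v ≠ F) ∧
      (∀ v ∈ L, x v ≠ s + ∑ v ∈ S, x v) := by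
  classical
  -- choose v0 and a
  have main : ∀ v0 ∈ S, ∀ a : 𝒢, a ≠ 0 →
      ∀ x1 : 𝒢, x1 ≠ 0 →
      (∑ v ∈ S, (fun v => if v = v0 then x1 else if v ∈ S then a else 0) v)
        = x1 + (S.card - 1) • a := by
    intro v0 hv0 a ha x1 hx1
    rw [← Finset.add_sum_erase _ _ hv0]
    simp only [if_pos rfl]
    congr 1
    rw [Finset.sum_congr rfl (fun v hv => ?_), Finset.sum_const,
      Finset.card_erase_of_mem hv0]
    have hv' := Finset.mem_erase.mp hv
    simp [hv'.1, hv'.2]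
  by_cases hL : L = ∅
  · -- no leaf children
    obtain ⟨v0, hv0⟩ := hS
    have hnt : Nontrivial 𝒢 := Fintype.one_lt_card_iff_nontrivial.mp (by omega)
    obtain ⟨a, ha⟩ := exists_ne (0 : 𝒢)
    obtain ⟨x1, hx10, hx1F, -⟩ :=
      avoid3 h4 0 (F - (s + (S.card - 1) • a)) (F - (s + (S.card - 1) • a))
    refine ⟨fun v => if v = v0 then x1 else if v ∈ S then a else 0, ?_, ?_, ?_, ?_⟩
    · intro v hv
      by_cases h : v = v0 <;> simp [h, hv, hx10, ha]
    · intro v hv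
      have : v ≠ v0 := fun h => hv (h ▸ hv0)
      simp [this, hv]
    · rw [main v0 hv0 a ha x1 hx10]
      intro h
      apply hx1F
      exact (by linear_combination (norm := abel1) h)
    · intro v hv; rw [hL] at hv; exact absurd hv (Finset.notMem_empty v)
  · -- L nonempty
    have hsne : s ≠ 0 := hs.resolve_right hL
    obtain ⟨v0, hv0L⟩ := Finset.nonempty_iff_ne_empty.mpr hL
    have hv0 : v0 ∈ S := hLS hv0L
    obtain ⟨a, ha, hCne⟩ := exists_smul_ne h4 hsne (S.card - 1)
    obtain ⟨x1, hx10, hx1F, hx1a⟩ :=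
      avoid3 h4 0 (F - (s + (S.card - 1) • a)) (a - (s + (S.card - 1) • a))
    refine ⟨fun v => if v = v0 then x1 else if v ∈ S then a else 0, ?_, ?_, ?_, ?_⟩
    · intro v hv
      by_cases h : v = v0 <;> simp [h, hv, hx10, ha]
    · intro v hv
      have : v ≠ v0 := fun h => hv (h ▸ hv0)
      simp [this, hv]
    · rw [main v0 hv0 a ha x1 hx10]
      intro h
      exact hx1F (by linear_combination (norm := abel1) h)
    · intro v hv
      rw [main v0 hv0 a ha x1 hx10]
      by_cases h : v = v0
      · subst h
        simp only [eq_self_iff_true, if_true]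
        intro hbad
        exact hCne (by linear_combination (norm := abel1) -hbad)
      · have hvS : v ∈ S := hLS hv
        simp only [if_neg h, if_pos hvS]
        intro hbad
        exact hx1a (by linear_combination (norm := abel1) -hbad)

end GroupLemmas

section TreeMachinery
variable {V : Type} [Fintype V] [DecidableEq V] (T : SimpleGraph V)

/-- The unique path from `v` to `r` in a tree. -/
noncomputable def Q (hT : T.IsTree) (r v : V) : T.Walk v r :=
  (hT.existsUnique_path v r).choose

lemma Q_isPath (hT : T.IsTree) (r v : V) : (Q T hT r v).IsPath :=
  (hT.existsUnique_path v r).choose_spec.1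

lemma Q_unique (hT : T.IsTree) (r v : V) (q : T.Walk v r) (hq : q.IsPath) :
    q = Q T hT r v :=
  (hT.existsUnique_path v r).choose_spec.2 q hq

/-- parent -/
noncomputable def par (hT : T.IsTree) (r v : V) : V := (Q T hT r v).getVert 1

/-- depth -/
noncomputable def dep (hT : T.IsTree) (r v : V) : ℕ := (Q T hT r v).length

variable (hT : T.IsTree) (r : V)

lemma Q_r : Q T hT r r = Walk.nil := (Q_unique T hT r r Walk.nil IsPath.nil).symm

lemma dep_r : dep T hT r r = 0 := by rw [dep, Q_r]; rfl

lemma par_r : par T hT r r = r := by rw [par, Q_r]; rfl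

lemma Q_not_nil {v : V} (hv : v ≠ r) : ¬ (Q T hT r v).Nil :=
  Walk.not_nil_of_ne hv

lemma adj_par {v : V} (hv : v ≠ r) : T.Adj v (par T hT r v) :=
  Walk.adj_snd (Q_not_nil T hT r hv)

lemma Q_par {v : V} (hv : v ≠ r) : (Q T hT r v).tail = Q T hT r (par T hT r v) :=
  Q_unique T hT r (par T hT r v) (Q T hT r v).tail
    ((Q_isPath T hT r v).tail)

lemma dep_par {v : V} (hv : v ≠ r) :
    dep T hT r (par T hT r v) + 1 = dep T hT r v := by
  rw [dep, dep, ← Q_par T hT r hv]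
  exact Walk.length_tail_add_one (Q_not_nil T hT r hv)

lemma dep_eq_zero {v : V} (h : dep T hT r v = 0) : v = r :=
  Walk.eq_of_length_eq_zero h

lemma dep_lt_card (v : V) : dep T hT r v < Fintype.card V :=
  (Q_isPath T hT r v).length_lt

/-- adjacency in a tree is the parent relation -/
lemma adj_iff_par {u v : V} (h : T.Adj u v) :
    par T hT r u = v ∨ par T hT r v = u := by
  by_cases hu : u ∈ (Q T hT r v).support
  · right
    have hv : v ≠ r := by
      rintro rfl
      rw [Q_r] at hu
      rw [Walk.mem_support_nil_iff] at hu
      exact h.ne hu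
    have htake : ((Q T hT r v).takeUntil u hu).IsPath :=
      (Q_isPath T hT r v).takeUntil hu
    have hsingle : (Walk.cons h.symm Walk.nil : T.Walk v u).IsPath := by
      rw [Walk.cons_isPath_iff]
      exact ⟨IsPath.nil, by simp [h.ne']⟩
    have hequ : (Q T hT r v).takeUntil u hu = Walk.cons h.symm Walk.nil :=
      (hT.existsUnique_path v u).unique htake hsingle
    have hspec := (Q T hT r v).take_spec hu
    rw [hequ] at hspec
    have : Q T hT r v = Walk.cons h.symm ((Q T hT r v).dropUntil u hu) :=
      hspec.symm
    rw [par, this]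
    exact Walk.snd_cons _ _
  · left
    have hW : (Walk.cons h (Q T hT r v)).IsPath := by
      rw [Walk.cons_isPath_iff]
      exact ⟨Q_isPath T hT r v, hu⟩
    have : Walk.cons h (Q T hT r v) = Q T hT r u := Q_unique T hT r u _ hW
    rw [par, ← this]
    exact Walk.snd_cons _ _

/-- children -/
noncomputable def children (v : V) : Finset V :=
  Finset.univ.filter (fun u => u ≠ r ∧ par T hT r u = v)

lemma mem_children {u v : V} :
    u ∈ children T hT r v ↔ u ≠ r ∧ par T hT r u = v := by
  simp [children]

lemma children_adj {u v : V} (h : u ∈ children T hT r v) : T.Adj u v := by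
  rw [mem_children] at h
  have := adj_par T hT r h.1
  rwa [h.2] at this

lemma children_dep {u v : V} (h : u ∈ children T hT r v) :
    dep T hT r u = dep T hT r v + 1 := by
  rw [mem_children] at h
  have := dep_par T hT r h.1
  rw [h.2] at this
  omega

lemma par_not_mem_children {v : V} (hv : v ≠ r) :
    par T hT r v ∉ children T hT r v := by
  intro hmem
  have h1 := children_dep T hT r hmem
  have h2 := dep_par T hT r hv
  omega

lemma neighborFinset_eq [DecidableRel T.Adj] (v : V) :
    T.neighborFinset v =
      if v = r then children T hT r v
      else insert (par T hT r v) (children T hT r v) := by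
  ext u
  rw [SimpleGraph.mem_neighborFinset]
  constructor
  · intro h
    rcases adj_iff_par T hT r h with hpv | hpu
    · -- par v = u
      have hv : v ≠ r := by
        rintro rfl
        rw [par_r] at hpv
        exact h.ne' hpv.symm
      rw [if_neg hv, Finset.mem_insert]
      exact Or.inl hpv.symm
    · -- par u = v
      have hu : u ≠ r := by
        rintro rfl
        rw [par_r] at hpu
        exact h.ne' hpu
      have : u ∈ children T hT r v := (mem_children T hT r).mpr ⟨hu, hpu⟩
      split <;> simp [this]
  · intro h
    by_cases hv : v = r
    · rw [if_pos hv] at h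
      exact (children_adj T hT r h).symm
    · rw [if_neg hv, Finset.mem_insert] at h
      rcases h with rfl | h
      · exact adj_par T hT r hv
      · exact (children_adj T hT r h).symm


variable {𝒢 : Type} [AddCommGroup 𝒢] [Fintype 𝒢]

noncomputable def Wt {𝒢 : Type} [AddCommGroup 𝒢] (g : V → 𝒢) (v : V) : 𝒢 :=
  (if v = r then 0 else g v) + ∑ u ∈ children T hT r v, g u


lemma exists_inv (h4 : 4 ≤ Fintype.card 𝒢)
    (hr : ∀ c ∈ children T hT r r, (children T hT r c).Nonempty) (n : ℕ) :
    ∃ g : V → 𝒢,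
      (∀ v, v ≠ r → dep T hT r v ≤ n → g v ≠ 0) ∧
      (∀ v, n < dep T hT r v → g v = 0) ∧
      (∀ v, v ≠ r →
        (dep T hT r v < n ∨ (dep T hT r v = n ∧ children T hT r v = ∅)) →
        Wt T hT r g v ≠ Wt T hT r g (par T hT r v)) := by
  classical
  induction n with
  | zero =>
    refine ⟨0, ?_, fun v _ => rfl, ?_⟩
    · intro v hv hd
      exact absurd (dep_eq_zero T hT r (Nat.le_zero.mp hd)) hv
    · intro v hv hcase
      rcases hcase with h | ⟨h, -⟩
      · omega
      · exact absurd (dep_eq_zero T hT r h) hv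
  | succ n ih =>
    obtain ⟨g, hg1, hg2, hg3⟩ := ih
    have H : ∀ u : V, ∃ x : V → 𝒢,
        dep T hT r u = n → (children T hT r u).Nonempty →
        ((∀ v ∈ children T hT r u, x v ≠ 0) ∧
         (∀ v ∉ children T hT r u, x v = 0) ∧
         ((if u = r then 0 else g u) + ∑ v ∈ children T hT r u, x v ≠
            Wt T hT r g (par T hT r u)) ∧
         (∀ v ∈ (children T hT r u).filter (fun c => children T hT r c = ∅),
            x v ≠ (if u = r then 0 else g u) + ∑ v ∈ children T hT r u, x v)) := by
      intro u
      by_cases hd : dep T hT r u = n ∧ (children T hT r u).Nonempty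
      · obtain ⟨hdu, hne⟩ := hd
        have hs : (if u = r then (0:𝒢) else g u) ≠ 0 ∨
            (children T hT r u).filter (fun c => children T hT r c = ∅) = ∅ := by
          by_cases hur : u = r
          · right
            rw [Finset.filter_eq_empty_iff]
            intro c hc
            rw [hur] at hc
            exact Finset.nonempty_iff_ne_empty.mp (hr c hc)
          · left
            rw [if_neg hur]
            exact hg1 u hur (le_of_eq hdu)
        obtain ⟨x, hx⟩ := keyChoice h4 (children T hT r u)
          ((children T hT r u).filter (fun c => children T hT r c = ∅)) hne
          (Finset.filter_subset _ _) (if u = r then 0 else g u)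
          (Wt T hT r g (par T hT r u)) hs
        exact ⟨x, fun _ _ => hx⟩
      · exact ⟨0, fun h1 h2 => absurd ⟨h1, h2⟩ hd⟩
    choose x hx using H
    set g' : V → 𝒢 :=
      fun v => if dep T hT r v = n + 1 then x (par T hT r v) v else g v with hg'def
    have hg'eq : ∀ v, dep T hT r v ≠ n + 1 → g' v = g v := by
      intro v h; rw [hg'def]; simp [h]
    have hg'new : ∀ v, dep T hT r v = n + 1 → g' v = x (par T hT r v) v := by
      intro v h; rw [hg'def]; simp [h]
    have hner : ∀ v, dep T hT r v = n + 1 → v ≠ r := by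
      intro v h hv
      rw [hv, dep_r] at h
      omega
    have hparv : ∀ v, dep T hT r v = n + 1 → dep T hT r (par T hT r v) = n := by
      intro v h
      have := dep_par T hT r (hner v h)
      omega
    have hmemv : ∀ v, dep T hT r v = n + 1 → v ∈ children T hT r (par T hT r v) := by
      intro v h
      exact (mem_children T hT r).mpr ⟨hner v h, rfl⟩
    -- weight computations
    have hWlow : ∀ u, dep T hT r u < n → Wt T hT r g' u = Wt T hT r g u := by
      intro u hu
      rw [Wt, Wt]
      congr 1
      · split_ifs with h
        · rfl
        · exact hg'eq u (by omega)
      · apply Finset.sum_congr rfl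
        intro c hc
        have := children_dep T hT r hc
        exact hg'eq c (by omega)
    have hWn : ∀ u, dep T hT r u = n →
        Wt T hT r g' u = (if u = r then 0 else g u) +
          ∑ c ∈ children T hT r u, x u c := by
      intro u hu
      rw [Wt]
      congr 1
      · split_ifs with h
        · rfl
        · exact hg'eq u (by omega)
      · apply Finset.sum_congr rfl
        intro c hc
        have hdc : dep T hT r c = n + 1 := by rw [children_dep T hT r hc, hu]
        rw [hg'new c hdc, (mem_children T hT r |>.mp hc).2]
    have hWhigh : ∀ u, dep T hT r u = n + 1 → children T hT r u = ∅ →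
        Wt T hT r g' u = x (par T hT r u) u := by
      intro u hu hch
      rw [Wt, hch, Finset.sum_empty, if_neg (hner u hu), hg'new u hu, add_zero]
    refine ⟨g', ?_, ?_, ?_⟩
    · intro v hv hd
      by_cases h : dep T hT r v = n + 1
      · rw [hg'new v h]
        exact (hx (par T hT r v) (hparv v h) ⟨v, hmemv v h⟩).1 v (hmemv v h)
      · rw [hg'eq v h]
        exact hg1 v hv (by omega)
    · intro v h
      rw [hg'eq v (by omega)]
      exact hg2 v (by omega)
    · intro v hv hcase
      have hdep1 : 1 ≤ dep T hT r v := by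
        rcases Nat.eq_zero_or_pos (dep T hT r v) with h | h
        · exact absurd (dep_eq_zero T hT r h) hv
        · omega
      rcases hcase with hlt | ⟨hd, hch⟩
      · -- dep v ≤ n
        have hparlt : dep T hT r (par T hT r v) + 1 = dep T hT r v := dep_par T hT r hv
        by_cases hn : dep T hT r v < n
        · rw [hWlow v hn, hWlow (par T hT r v) (by omega)]
          exact hg3 v hv (Or.inl hn)
        · have hdv : dep T hT r v = n := by omega
          by_cases hch : children T hT r v = ∅
          · have h1 : Wt T hT r g' v = Wt T hT r g v := by
              rw [hWn v hdv, Wt, hch, Finset.sum_empty, Finset.sum_empty]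
            rw [h1, hWlow (par T hT r v) (by omega)]
            exact hg3 v hv (Or.inr ⟨hdv, hch⟩)
          · rw [hWn v hdv, hWlow (par T hT r v) (by omega)]
            exact (hx v hdv (Finset.nonempty_iff_ne_empty.mpr hch)).2.2.1
      · -- dep v = n + 1, v leaf
        rw [hWhigh v hd hch, hWn (par T hT r v) (hparv v hd)]
        exact (hx (par T hT r v) (hparv v hd) ⟨v, hmemv v hd⟩).2.2.2 v
          (Finset.mem_filter.mpr ⟨hmemv v hd, hch⟩)


lemma tree_main {V : Type} [Fintype V] [DecidableEq V]
    (T : SimpleGraph V) [DecidableRel T.Adj] (hT : T.IsTree)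
    (h3 : 3 ≤ Fintype.card V) (𝒢 : Type) [AddCommGroup 𝒢] [Fintype 𝒢]
    (h4 : 4 ≤ Fintype.card 𝒢) :
    ∃ f : V → V → 𝒢,
      (∀ u v, f u v = f v u) ∧
      (∀ u v, T.Adj u v → f u v ≠ 0) ∧
      (∀ u v, T.Adj u v →
        (∑ x ∈ T.neighborFinset u, f u x) ≠ (∑ x ∈ T.neighborFinset v, f v x)) := by
  classical
  have hNE : Nonempty V := Fintype.card_pos_iff.mp (by omega)
  obtain ⟨r0⟩ := hNE
  obtain ⟨r, -, hrmax⟩ := Finset.exists_max_image Finset.univ (dep T hT r0)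
    ⟨r0, Finset.mem_univ r0⟩
  have hnt : Nontrivial V := Fintype.one_lt_card_iff_nontrivial.mp (by omega)
  obtain ⟨v1, hv1⟩ := exists_ne r0
  have hdep1 : 1 ≤ dep T hT r0 v1 := by
    rcases Nat.eq_zero_or_pos (dep T hT r0 v1) with h | h
    · exact absurd (dep_eq_zero T hT r0 h) hv1
    · omega
  have hrne : r ≠ r0 := by
    rintro rfl
    have := hrmax v1 (Finset.mem_univ v1)
    rw [dep_r] at this
    omega
  have hleaf : ∀ u, T.Adj r u → u = par T hT r0 r := by
    intro u hadj
    rcases adj_iff_par T hT r0 hadj with h | h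
    · exact h.symm
    · -- par u = r : impossible, u would be deeper than the max
      exfalso
      have hur0 : u ≠ r0 := by
        rintro rfl
        rw [par_r] at h
        exact hrne h.symm
      have h1 := dep_par T hT r0 hur0
      rw [h] at h1
      have := hrmax u (Finset.mem_univ u)
      omega
  set c := par T hT r0 r with hcdef
  have hcadj : T.Adj r c := adj_par T hT r0 hrne
  have hcr : c ≠ r := hcadj.ne'
  have hchr : children T hT r r = {c} := by
    ext u
    rw [mem_children, Finset.mem_singleton]
    constructor
    · rintro ⟨hur, hpu⟩
      have : T.Adj u r := by
        have := adj_par T hT r hur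
        rwa [hpu] at this
      exact hleaf u this.symm
    · rintro rfl
      refine ⟨hcr, ?_⟩
      rcases adj_iff_par T hT r hcadj.symm with h | h
      · exact h
      · rw [par_r] at h
        exact absurd h.symm hcr
  have hcchild : (children T hT r c).Nonempty := by
    by_contra hempty
    rw [Finset.not_nonempty_iff_eq_empty] at hempty
    have hall : ∀ n, ∀ v : V, dep T hT r v ≤ n → v = r ∨ v = c := by
      intro n
      induction n with
      | zero =>
        intro v hd
        exact Or.inl (dep_eq_zero T hT r (Nat.le_zero.mp hd))
      | succ n ih =>
        intro v hd
        by_cases hvr : v = r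
        · exact Or.inl hvr
        have hpv : v ∈ children T hT r (par T hT r v) :=
          (mem_children T hT r).mpr ⟨hvr, rfl⟩
        have hdpar := dep_par T hT r hvr
        rcases ih (par T hT r v) (by omega) with h | h
        · right
          rw [h, hchr] at hpv
          exact Finset.mem_singleton.mp hpv
        · exfalso
          rw [h, hempty] at hpv
          exact Finset.notMem_empty v hpv
    have hsub : (Finset.univ : Finset V) ⊆ {r, c} := by
      intro v _
      rcases hall (dep T hT r v) v le_rfl with rfl | rfl <;> simp
    have hle := Finset.card_le_card hsub
    rw [Finset.card_univ] at hle
    have h2 : ({r, c} : Finset V).card ≤ 2 := by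
      apply le_trans (Finset.card_insert_le _ _)
      simp
    omega
  have hr' : ∀ cc ∈ children T hT r r, (children T hT r cc).Nonempty := by
    intro cc hcc
    rw [hchr, Finset.mem_singleton] at hcc
    subst hcc
    exact hcchild
  obtain ⟨g, hg1, hg2, hg3⟩ := exists_inv T hT r h4 hr' (Fintype.card V)
  have hforbid : ∀ u v : V, (u ≠ r ∧ par T hT r u = v) →
      (v ≠ r ∧ par T hT r v = u) → False := by
    rintro u v ⟨hu, hpu⟩ ⟨hv, hpv⟩
    have h1 := dep_par T hT r hu
    have h2 := dep_par T hT r hv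
    rw [hpu] at h1
    rw [hpv] at h2
    omega
  refine ⟨fun u v => if u ≠ r ∧ par T hT r u = v then g u
    else if v ≠ r ∧ par T hT r v = u then g v else 0, ?_, ?_, ?_⟩
  · -- symmetry
    intro u v
    by_cases h1 : u ≠ r ∧ par T hT r u = v
    · by_cases h2 : v ≠ r ∧ par T hT r v = u
      · exact (hforbid u v h1 h2).elim
      · simp only [if_pos h1, if_neg h2]
    · by_cases h2 : v ≠ r ∧ par T hT r v = u
      · simp only [if_pos h2, if_neg h1]
      · simp only [if_neg h1, if_neg h2]
  · -- nowhere zero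
    intro u v hadj
    beta_reduce
    rcases adj_iff_par T hT r hadj with hp | hp
    · have hur : u ≠ r := by
        rintro rfl
        rw [par_r] at hp
        exact hadj.ne hp
      rw [if_pos ⟨hur, hp⟩]
      exact hg1 u hur (le_of_lt (dep_lt_card T hT r u))
    · by_cases h1 : u ≠ r ∧ par T hT r u = v
      · rw [if_pos h1]
        exact hg1 u h1.1 (le_of_lt (dep_lt_card T hT r u))
      · have hvr : v ≠ r := by
          rintro rfl
          rw [par_r] at hp
          exact hadj.ne' hp
        rw [if_neg h1, if_pos ⟨hvr, hp⟩]
        exact hg1 v hvr (le_of_lt (dep_lt_card T hT r v))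
  · -- proper weights
    have hsum : ∀ v, (∑ x ∈ T.neighborFinset v,
        (if v ≠ r ∧ par T hT r v = x then g v
          else if x ≠ r ∧ par T hT r x = v then g x else 0)) = Wt T hT r g v := by
      intro v
      rw [neighborFinset_eq T hT r v]
      by_cases hv : v = r
      · rw [if_pos hv, Wt, if_pos hv, zero_add]
        apply Finset.sum_congr rfl
        intro u hu
        obtain ⟨hur, hpu⟩ := (mem_children T hT r).mp hu
        rw [if_neg (fun h => h.1 hv), if_pos ⟨hur, hpu⟩]
      · rw [if_neg hv, Finset.sum_insert (par_not_mem_children T hT r hv), Wt, if_neg hv]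
        congr 1
        · rw [if_pos ⟨hv, rfl⟩]
        · apply Finset.sum_congr rfl
          intro u hu
          obtain ⟨hur, hpu⟩ := (mem_children T hT r).mp hu
          have hnot : ¬(v ≠ r ∧ par T hT r v = u) := by
            rintro ⟨-, hpv⟩
            exact par_not_mem_children T hT r hv (hpv ▸ hu)
          rw [if_neg hnot, if_pos ⟨hur, hpu⟩]
    intro u v hadj
    beta_reduce
    rw [hsum u, hsum v]
    rcases adj_iff_par T hT r hadj with hp | hp
    · have hur : u ≠ r := by
        rintro rfl
        rw [par_r] at hp
        exact hadj.ne hp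
      rw [← hp]
      exact hg3 u hur (Or.inl (dep_lt_card T hT r u))
    · have hvr : v ≠ r := by
        rintro rfl
        rw [par_r] at hp
        exact hadj.ne' hp
      rw [← hp]
      exact (hg3 v hvr (Or.inl (dep_lt_card T hT r v))).symm


end TreeMachinery

end Stmt9Aux

lemma ds_nbr0 : doubleStar.neighborFinset 0 = {1,2,3} := by
  ext x; simp only [SimpleGraph.mem_neighborFinset]; revert x; decide
lemma ds_nbr1 : doubleStar.neighborFinset 1 = {0,4,5} := by
  ext x; simp only [SimpleGraph.mem_neighborFinset]; revert x; decide
lemma ds_nbr2 : doubleStar.neighborFinset 2 = {0} := by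
  ext x; simp only [SimpleGraph.mem_neighborFinset]; revert x; decide
lemma ds_nbr3 : doubleStar.neighborFinset 3 = {0} := by
  ext x; simp only [SimpleGraph.mem_neighborFinset]; revert x; decide
lemma ds_nbr4 : doubleStar.neighborFinset 4 = {1} := by
  ext x; simp only [SimpleGraph.mem_neighborFinset]; revert x; decide
lemma ds_nbr5 : doubleStar.neighborFinset 5 = {1} := by
  ext x; simp only [SimpleGraph.mem_neighborFinset]; revert x; decide

instance (e : Sym2 (Fin 6)) : DecidableRel (doubleStar \ SimpleGraph.fromEdgeSet {e}).Adj :=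
  fun a b => decidable_of_iff (doubleStar.Adj a b ∧ ¬(s(a,b) = e ∧ a ≠ b)) (by
    rw [SimpleGraph.sdiff_adj, SimpleGraph.fromEdgeSet_adj]; simp [Set.mem_singleton_iff])

lemma ds_bridge : ∀ v w : Fin 6, doubleStar.Adj v w →
    ¬ (doubleStar \ SimpleGraph.fromEdgeSet {s(v,w)}).Reachable v w := by decide

lemma zkey : ∀ a b c : ZMod 3, ¬(a = 0) → b ≠ 0 ∧ c ≠ 0 ∧ a + b + c ≠ b ∧ a + b + c ≠ c →
    a + b + c = 0 := by decide

lemma sum3 (f : Fin 6 → ZMod 3) (x y z : Fin 6) (h1 : x ≠ y) (h2 : x ≠ z) (h3 : y ≠ z) :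
    ∑ t ∈ ({x,y,z} : Finset (Fin 6)), f t = f x + f y + f z := by
  rw [Finset.sum_insert (by simp [h1, h2]), Finset.sum_insert (by simp [h3]),
    Finset.sum_singleton, add_assoc]


lemma part2 : doubleStar.IsTree ∧ 3 ≤ Fintype.card (Fin 6) ∧
      ¬ ∃ f : Fin 6 → Fin 6 → ZMod 3,
        (∀ u v, f u v = f v u) ∧
        (∀ u v, doubleStar.Adj u v → f u v ≠ 0) ∧
        (∀ u v, doubleStar.Adj u v →
          (∑ x ∈ doubleStar.neighborFinset u, f u x) ≠
            (∑ x ∈ doubleStar.neighborFinset v, f v x)) := by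
  refine ⟨⟨?_, ?_⟩, by simp, ?_⟩
  · rw [SimpleGraph.connected_iff]
    exact ⟨by decide, ⟨0⟩⟩
  · rw [SimpleGraph.isAcyclic_iff_forall_adj_isBridge]
    intro v w h
    rw [SimpleGraph.isBridge_iff]
    exact ds_bridge v w h
  · rintro ⟨f, hsym, hnz, hw⟩
    have h01 : doubleStar.Adj 0 1 := by decide
    have h02 : doubleStar.Adj 0 2 := by decide
    have h03 : doubleStar.Adj 0 3 := by decide
    have h14 : doubleStar.Adj 1 4 := by decide
    have h15 : doubleStar.Adj 1 5 := by decide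
    have w0 : ∑ x ∈ doubleStar.neighborFinset 0, f 0 x = f 0 1 + f 0 2 + f 0 3 := by
      rw [ds_nbr0]; exact sum3 (f 0) 1 2 3 (by decide) (by decide) (by decide)
    have w1 : ∑ x ∈ doubleStar.neighborFinset 1, f 1 x = f 0 1 + f 1 4 + f 1 5 := by
      rw [ds_nbr1, sum3 (f 1) 0 4 5 (by decide) (by decide) (by decide), hsym 1 0]
    have w2 : ∑ x ∈ doubleStar.neighborFinset 2, f 2 x = f 0 2 := by
      rw [ds_nbr2, Finset.sum_singleton, hsym 2 0]
    have w3 : ∑ x ∈ doubleStar.neighborFinset 3, f 3 x = f 0 3 := by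
      rw [ds_nbr3, Finset.sum_singleton, hsym 3 0]
    have w4 : ∑ x ∈ doubleStar.neighborFinset 4, f 4 x = f 1 4 := by
      rw [ds_nbr4, Finset.sum_singleton, hsym 4 1]
    have w5 : ∑ x ∈ doubleStar.neighborFinset 5, f 5 x = f 1 5 := by
      rw [ds_nbr5, Finset.sum_singleton, hsym 5 1]
    have e0 : f 0 1 + f 0 2 + f 0 3 = 0 :=
      zkey _ _ _ (hnz 0 1 h01)
        ⟨hnz 0 2 h02, hnz 0 3 h03, w0 ▸ w2 ▸ hw 0 2 h02, w0 ▸ w3 ▸ hw 0 3 h03⟩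
    have e1 : f 0 1 + f 1 4 + f 1 5 = 0 :=
      zkey _ _ _ (hnz 0 1 h01)
        ⟨hnz 1 4 h14, hnz 1 5 h15, w1 ▸ w4 ▸ hw 1 4 h14, w1 ▸ w5 ▸ hw 1 5 h15⟩
    exact hw 0 1 h01 (by rw [w0, w1, e0, e1])


/-- `(χ^Σ_g)*(T) ≤ 4` for every tree `T` of order at least 3 (for every
Abelian group of order at least 4 there is a nowhere-zero labeling whose weights properly
color the vertices), and the bound is sharp: the symmetric double star with 5 edges is a
tree of order at least 3 admitting no such labeling over `ℤ₃`. -/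
theorem stmt_9 :
    (∀ (V : Type) [Fintype V] [DecidableEq V]
      (T : SimpleGraph V) [DecidableRel T.Adj], T.IsTree → 3 ≤ Fintype.card V →
      ∀ (𝒢 : Type) [AddCommGroup 𝒢] [Fintype 𝒢], 4 ≤ Fintype.card 𝒢 →
      ∃ f : V → V → 𝒢,
        (∀ u v, f u v = f v u) ∧
        (∀ u v, T.Adj u v → f u v ≠ 0) ∧
        (∀ u v, T.Adj u v →
          (∑ x ∈ T.neighborFinset u, f u x) ≠ (∑ x ∈ T.neighborFinset v, f v x))) ∧
    (doubleStar.IsTree ∧ 3 ≤ Fintype.card (Fin 6) ∧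
      ¬ ∃ f : Fin 6 → Fin 6 → ZMod 3,
        (∀ u v, f u v = f v u) ∧
        (∀ u v, doubleStar.Adj u v → f u v ≠ 0) ∧
        (∀ u v, doubleStar.Adj u v →
          (∑ x ∈ doubleStar.neighborFinset u, f u x) ≠
            (∑ x ∈ doubleStar.neighborFinset v, f v x))) := by
  constructor
  · intro V _ _ T _ hT h3 𝒢 _ _ h4
    exact Stmt9Aux.tree_main T hT h3 𝒢 h4
  · exact part2
end

section
/- Let T be a tree of order n ≥ 3 and let 𝒢 be any Abelian group of order at least 5. Then there exists a labeling f: E(T) → 𝒢 \ {0} such that adjacent vertices receive distinct weights and no vertex has weight 0. -/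
set_option linter.unusedSectionVars false

open SimpleGraph Finset

attribute [local instance 10] Classical.propDecidable

namespace Stmt11

variable {𝒢 : Type} [AddCommGroup 𝒢] [Fintype 𝒢]

lemma exists_ne4 (h5 : 5 ≤ Fintype.card 𝒢) (a b c d : 𝒢) :
    ∃ x : 𝒢, x ≠ a ∧ x ≠ b ∧ x ≠ c ∧ x ≠ d := by
  by_contra h
  have hsub : (Finset.univ : Finset 𝒢) ⊆ {a, b, c, d} := by
    intro x _
    by_contra hx
    simp only [Finset.mem_insert, Finset.mem_singleton, not_or] at hx
    exact h ⟨x, hx.1, hx.2.1, hx.2.2.1, hx.2.2.2⟩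
  have h1 := Finset.card_le_card hsub
  have h2 : ({a, b, c, d} : Finset 𝒢).card ≤ 4 := by
    refine (Finset.card_insert_le _ _).trans ?_
    have hb := Finset.card_insert_le b ({c, d} : Finset 𝒢)
    have hc := Finset.card_insert_le c ({d} : Finset 𝒢)
    simp only [Finset.card_singleton] at *
    omega
  rw [Finset.card_univ] at h1
  omega

lemma exists_good_a (h5 : 5 ≤ Fintype.card 𝒢) (m : ℕ) (y : 𝒢) (hy : y ≠ 0) :
    ∃ a : 𝒢, a ≠ 0 ∧ y + m • a ≠ 0 := by
  obtain ⟨a₁, ha₁, -, -, -⟩ := exists_ne4 h5 0 0 0 0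
  by_cases h1 : y + m • a₁ = 0
  · obtain ⟨a₂, h0, -, hneg, -⟩ := exists_ne4 h5 0 a₁ (-a₁) 0
    by_cases h2 : y + m • a₂ = 0
    · refine ⟨a₁ + a₂, ?_, ?_⟩
      · intro h
        exact hneg (eq_neg_of_add_eq_zero_right h)
      · have heq : y + m • (a₁ + a₂) = (y + m • a₁) + (y + m • a₂) - y := by
          rw [smul_add]; abel
        rw [heq, h1, h2]
        simpa using hy
    · exact ⟨a₂, h0, h2⟩
  · exact ⟨a₁, ha₁, h1⟩

variable {V : Type} [DecidableEq V]

/-- The key property of a family of labels for the children `S` of a vertex: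
all labels nonzero, none equal to the resulting weight `y + ∑`, and the
resulting weight avoids `0` and the parent's weight `wp`. -/
def Good (S : Finset V) (y wp : 𝒢) (x : V → 𝒢) : Prop :=
  (∀ c ∈ S, x c ≠ 0 ∧ x c ≠ y + ∑ d ∈ S, x d) ∧
    y + (∑ d ∈ S, x d) ≠ 0 ∧ y + (∑ d ∈ S, x d) ≠ wp

lemma exists_good (h5 : 5 ≤ Fintype.card 𝒢) (S : Finset V) (hS : S.Nonempty)
    {y : 𝒢} (hy : y ≠ 0) (wp : 𝒢) : ∃ x, Good S y wp x := by
  obtain ⟨c₀, hc₀⟩ := hS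
  obtain ⟨a, ha, hs⟩ := exists_good_a h5 (S.card - 1) y hy
  set s := y + (S.card - 1) • a with hsdef
  obtain ⟨b, hb0, hba, hbs, hbw⟩ := exists_ne4 h5 0 (a - s) (-s) (wp - s)
  refine ⟨fun c => if c = c₀ then b else a, ?_⟩
  have hsum : (∑ d ∈ S, if d = c₀ then b else a) = b + (S.card - 1) • a := by
    rw [← Finset.add_sum_erase _ _ hc₀, if_pos rfl]
    congr 1
    rw [Finset.sum_congr rfl (fun d hd => if_neg (Finset.ne_of_mem_erase hd)),
      Finset.sum_const, Finset.card_erase_of_mem hc₀]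
  have hW : y + (∑ d ∈ S, if d = c₀ then b else a) = s + b := by
    rw [hsum, hsdef]; abel
  refine ⟨?_, ?_, ?_⟩
  · intro c hc
    by_cases hcc : c = c₀
    · subst hcc
      simp only [if_pos rfl]
      refine ⟨hb0, ?_⟩
      rw [hW]
      intro h
      exact hs (right_eq_add.mp h)
    · simp only [if_neg hcc]
      refine ⟨ha, ?_⟩
      rw [hW]
      intro h
      exact hba (by rw [h]; abel)
  · rw [hW]
    intro h
    exact hbs (eq_neg_of_add_eq_zero_right h)
  · rw [hW]
    intro h
    exact hbw (by rw [← h]; abel)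

/-- Choice of children labels. -/
noncomputable def CL (S : Finset V) (y wp : 𝒢) : V → 𝒢 :=
  if h : ∃ x, Good S y wp x then h.choose else fun _ => 0

lemma CL_spec (h5 : 5 ≤ Fintype.card 𝒢) (S : Finset V) (hS : S.Nonempty)
    {y : 𝒢} (hy : y ≠ 0) (wp : 𝒢) : Good S y wp (CL S y wp) := by
  rw [CL, dif_pos (exists_good h5 S hS hy wp)]
  exact (exists_good h5 S hS hy wp).choose_spec

end Stmt11

namespace Stmt11Tree

attribute [local instance 10] Classical.propDecidable

variable {V : Type} [Fintype V] [DecidableEq V] (T : SimpleGraph V) [DecidableRel T.Adj]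

/-- The unique path from `r` to `v` in the tree. -/
noncomputable def pt (htree : T.IsTree) (r v : V) : T.Walk r v :=
  (htree.existsUnique_path r v).choose

lemma pt_isPath (htree : T.IsTree) (r v : V) : (pt T htree r v).IsPath :=
  (htree.existsUnique_path r v).choose_spec.1

lemma pt_unique (htree : T.IsTree) {r v : V} (q : T.Walk r v) (hq : q.IsPath) :
    q = pt T htree r v :=
  (htree.existsUnique_path r v).choose_spec.2 q hq

noncomputable def depth (htree : T.IsTree) (r v : V) : ℕ := (pt T htree r v).length

/-- The parent of `v` in the tree rooted at `r` (junk value `r` for `v = r`). -/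
noncomputable def par (htree : T.IsTree) (r v : V) : V :=
  (pt T htree r v).reverse.getVert 1

lemma pt_r (htree : T.IsTree) (r : V) : pt T htree r r = Walk.nil :=
  (pt_unique T htree Walk.nil Walk.IsPath.nil).symm

lemma par_r (htree : T.IsTree) (r : V) : par T htree r r = r := by
  rw [par, pt_r]
  rfl

lemma decomp (htree : T.IsTree) {r v : V} (hv : v ≠ r) :
    ∃ (u : V) (h : T.Adj u v), pt T htree r v = (pt T htree r u).concat h ∧
      par T htree r v = u ∧ depth T htree r v = depth T htree r u + 1 := by
  obtain ⟨x, hadj, q, hq⟩ := Walk.exists_eq_cons_of_ne hv (pt T htree r v).reverse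
  have hrev : pt T htree r v = q.reverse.concat hadj.symm := by
    rw [← (pt T htree r v).reverse_reverse, hq, Walk.reverse_cons]
    exact (Walk.concat_eq_append _ _).symm
  have hqpath : q.reverse.IsPath := by
    have h1 : (pt T htree r v).reverse.IsPath := (pt_isPath T htree r v).reverse
    rw [hq] at h1
    exact h1.of_cons.reverse
  have hqeq : q.reverse = pt T htree r x := pt_unique T htree q.reverse hqpath
  refine ⟨x, hadj.symm, by rw [hrev, hqeq], ?_, ?_⟩
  · rw [par, hq]
    exact (Walk.getVert_cons_succ (n := 0) q hadj).trans (Walk.getVert_zero q)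
  · rw [depth, depth, hrev, Walk.length_concat, ← hqeq, Walk.length_reverse]

lemma adj_par (htree : T.IsTree) {r v : V} (hv : v ≠ r) : T.Adj (par T htree r v) v := by
  obtain ⟨u, h, -, hp, -⟩ := decomp T htree hv
  rw [hp]; exact h

lemma depth_par (htree : T.IsTree) {r v : V} (hv : v ≠ r) :
    depth T htree r v = depth T htree r (par T htree r v) + 1 := by
  obtain ⟨u, h, -, hp, hd⟩ := decomp T htree hv
  rw [hp]; exact hd

lemma par_of_concat (htree : T.IsTree) {r u v : V} (h : T.Adj u v)
    (he : pt T htree r v = (pt T htree r u).concat h) : par T htree r v = u := by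
  rw [par, he, Walk.reverse_concat]
  exact (Walk.getVert_cons_succ (n := 0) _ h.symm).trans (Walk.getVert_zero _)

lemma dichotomy (htree : T.IsTree) (r : V) {u v : V} (h : T.Adj u v) :
    par T htree r v = u ∨ par T htree r u = v := by
  by_cases hv : v ∈ (pt T htree r u).support
  · right
    have ht : (pt T htree r u).takeUntil v hv = pt T htree r v :=
      pt_unique T htree _ ((pt_isPath T htree r u).takeUntil hv)
    have hd : ((pt T htree r u).dropUntil v hv).IsPath :=
      (pt_isPath T htree r u).dropUntil hv
    have hcons : (Walk.cons h.symm Walk.nil : T.Walk v u).IsPath := by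
      rw [Walk.cons_isPath_iff]
      refine ⟨Walk.IsPath.nil, ?_⟩
      simp [h.ne']
    have hsingle : (pt T htree r u).dropUntil v hv = Walk.cons h.symm Walk.nil := by
      have := htree.IsAcyclic.path_unique ⟨_, hd⟩ ⟨Walk.cons h.symm Walk.nil, hcons⟩
      exact congrArg Subtype.val this
    apply par_of_concat T htree h.symm
    calc pt T htree r u
        = ((pt T htree r u).takeUntil v hv).append ((pt T htree r u).dropUntil v hv) :=
          (Walk.take_spec _ hv).symm
      _ = (pt T htree r v).append (Walk.cons h.symm Walk.nil) := by rw [ht, hsingle]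
      _ = (pt T htree r v).concat h.symm := (Walk.concat_eq_append _ _).symm
  · left
    have hpath : ((pt T htree r u).concat h).IsPath := by
      have h1 : ((pt T htree r u).concat h).reverse.IsPath := by
        rw [Walk.reverse_concat]
        exact ((pt_isPath T htree r u).reverse).cons
          (by simpa [Walk.support_reverse] using hv)
      simpa [Walk.concat_eq_append] using h1.reverse
    exact par_of_concat T htree h (pt_unique T htree _ hpath).symm

lemma exclusive (htree : T.IsTree) (r : V) {u v : V} (h : T.Adj u v)
    (h1 : par T htree r v = u) : par T htree r u ≠ v := by
  intro h2
  have hvr : v ≠ r := by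
    rintro rfl
    rw [par_r] at h1
    exact h.ne' h1
  have hur : u ≠ r := by
    rintro rfl
    rw [par_r] at h2
    exact h.ne h2
  have d1 := depth_par T htree hvr
  have d2 := depth_par T htree hur
  rw [h1] at d1
  rw [h2] at d2
  omega


/-- The children of `p` in the tree rooted at `r`. -/
noncomputable def children (htree : T.IsTree) (r p : V) : Finset V :=
  (T.neighborFinset p).filter (fun c => par T htree r c = p)

lemma mem_children (htree : T.IsTree) {r p c : V} :
    c ∈ children T htree r p ↔ T.Adj p c ∧ par T htree r c = p := by
  simp [children, Finset.mem_filter, SimpleGraph.mem_neighborFinset]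

lemma par_notmem_children (htree : T.IsTree) {r v : V} (hv : v ≠ r) :
    par T htree r v ∉ children T htree r v := by
  intro hm
  obtain ⟨h1, h2⟩ := (mem_children T htree).mp hm
  exact exclusive T htree r (adj_par T htree hv) rfl h2

lemma neighbor_split (htree : T.IsTree) {r v : V} (hv : v ≠ r) :
    T.neighborFinset v = insert (par T htree r v) (children T htree r v) := by
  ext u
  simp only [SimpleGraph.mem_neighborFinset, Finset.mem_insert, mem_children]
  constructor
  · intro hadj
    rcases dichotomy T htree r hadj with h1 | h1
    · exact Or.inr ⟨hadj, h1⟩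
    · exact Or.inl h1.symm
  · rintro (rfl | ⟨hadj, -⟩)
    · exact (adj_par T htree hv).symm
    · exact hadj

lemma children_ne_r (htree : T.IsTree) {r p c : V} (hp : p ≠ r)
    (hc : c ∈ children T htree r p) : c ≠ r := by
  obtain ⟨h1, h2⟩ := (mem_children T htree).mp hc
  rintro rfl
  rw [par_r] at h2
  exact hp h2.symm

lemma children_par (htree : T.IsTree) {r p c : V} (hc : c ∈ children T htree r p) :
    par T htree r c = p := ((mem_children T htree).mp hc).2

/-- Every tree with at least 3 vertices has a leaf. -/
lemma exists_leaf (htree : T.IsTree) (hord : 3 ≤ Fintype.card V) :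
    ∃ r c₀ : V, T.neighborFinset r = {c₀} := by
  have hdeg1 : ∀ v : V, 1 ≤ T.degree v := by
    intro v
    obtain ⟨w, hw⟩ := Fintype.exists_ne_of_one_lt_card (by omega) v
    obtain ⟨q⟩ := htree.isConnected.preconnected v w
    obtain ⟨x, hadj, -, -⟩ := Walk.exists_eq_cons_of_ne (Ne.symm hw) q
    exact (SimpleGraph.degree_pos_iff_exists_adj T v).mpr ⟨x, hadj⟩
  by_contra h
  push_neg at h
  have hdeg2 : ∀ v : V, 2 ≤ T.degree v := by
    intro v
    rcases Nat.lt_or_ge (T.degree v) 2 with hlt | hge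
    · exfalso
      have h1 : T.degree v = 1 := le_antisymm (by omega) (hdeg1 v)
      obtain ⟨c, hc⟩ := Finset.card_eq_one.mp h1
      exact h v c hc
    · exact hge
  have hsum := T.sum_degrees_eq_twice_card_edges
  have hedge := htree.card_edgeFinset
  have hle : 2 * Fintype.card V ≤ ∑ v : V, T.degree v := by
    calc 2 * Fintype.card V = ∑ _v : V, 2 := by
          rw [Finset.sum_const, Finset.card_univ, smul_eq_mul, mul_comm]
      _ ≤ ∑ v : V, T.degree v := Finset.sum_le_sum (fun v _ => hdeg2 v)
  omega

lemma exists_second (htree : T.IsTree) (hord : 3 ≤ Fintype.card V) {r c₀ : V}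
    (hleaf : T.neighborFinset r = {c₀}) : ∃ u, T.Adj c₀ u ∧ u ≠ r := by
  by_contra h
  push_neg at h
  have key : ∀ (x w : V) (q : T.Walk x w), (x = r ∨ x = c₀) → (w = r ∨ w = c₀) := by
    intro x w q
    induction q with
    | nil => exact id
    | @cons a b c hadj p ih =>
      intro hx
      apply ih
      rcases hx with rfl | rfl
      · right
        have hb : b ∈ T.neighborFinset a := (SimpleGraph.mem_neighborFinset T a b).mpr hadj
        rw [hleaf] at hb
        simpa using hb
      · left
        exact h b hadj
  have hw : ∃ w : V, w ∉ ({r, c₀} : Finset V) := by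
    by_contra hw
    push_neg at hw
    have hsub : (Finset.univ : Finset V) ⊆ {r, c₀} := fun x _ => hw x
    have h1 := Finset.card_le_card hsub
    have h2 : ({r, c₀} : Finset V).card ≤ 2 := by
      refine (Finset.card_insert_le _ _).trans ?_
      simp
    rw [Finset.card_univ] at h1
    omega
  obtain ⟨w, hw⟩ := hw
  simp only [Finset.mem_insert, Finset.mem_singleton, not_or] at hw
  obtain ⟨q⟩ := htree.isConnected.preconnected r w
  rcases key r w q (Or.inl rfl) with h1 | h1
  · exact hw.1 h1
  · exact hw.2 h1


open Stmt11

section Main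

variable {𝒢 : Type} [AddCommGroup 𝒢] [Fintype 𝒢]
variable (htree : T.IsTree) (r c₀ : V) (a₀ : 𝒢)

/-- One step of the label construction. -/
noncomputable def stepF (v : V) (pr : 𝒢 × 𝒢) : 𝒢 × 𝒢 :=
  if par T htree r v = r then (a₀, a₀)
  else (CL (children T htree r (par T htree r v)) pr.1 pr.2 v,
        pr.1 + ∑ c ∈ children T htree r (par T htree r v),
          CL (children T htree r (par T htree r v)) pr.1 pr.2 c)

noncomputable def B : ℕ → V → 𝒢 × 𝒢
  | 0 => fun _ => (a₀, a₀)
  | (d+1) => fun v => stepF T htree r a₀ v (B d (par T htree r v))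

noncomputable def A (v : V) : 𝒢 × 𝒢 := B T htree r a₀ (depth T htree r v) v

noncomputable def lab (v : V) : 𝒢 := (A T htree r a₀ v).1

noncomputable def f (u v : V) : 𝒢 :=
  if T.Adj u v then
    (if u = par T htree r v then lab T htree r a₀ v else lab T htree r a₀ u)
  else 0

/-- The weight of a vertex. -/
noncomputable def Wt (v : V) : 𝒢 := ∑ u ∈ T.neighborFinset v, f T htree r a₀ v u

lemma A_rec {v : V} (hv : v ≠ r) :
    A T htree r a₀ v = stepF T htree r a₀ v (A T htree r a₀ (par T htree r v)) := by
  rw [A, depth_par T htree hv]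
  rfl

lemma lab_top {v : V} (hv : v ≠ r) (hp : par T htree r v = r) :
    lab T htree r a₀ v = a₀ ∧ (A T htree r a₀ v).2 = a₀ := by
  rw [lab, A_rec T htree r a₀ hv, stepF, if_pos hp]
  exact ⟨rfl, rfl⟩

lemma A_gen {v : V} (hv : v ≠ r) (hp : par T htree r v ≠ r) :
    lab T htree r a₀ v = CL (children T htree r (par T htree r v))
        (lab T htree r a₀ (par T htree r v)) ((A T htree r a₀ (par T htree r v)).2) v ∧
    (A T htree r a₀ v).2 = lab T htree r a₀ (par T htree r v) +
      ∑ c ∈ children T htree r (par T htree r v),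
        CL (children T htree r (par T htree r v))
          (lab T htree r a₀ (par T htree r v)) ((A T htree r a₀ (par T htree r v)).2) c := by
  rw [lab, A_rec T htree r a₀ hv, stepF, if_neg hp]
  exact ⟨rfl, rfl⟩

lemma f_par {v : V} (hv : v ≠ r) :
    f T htree r a₀ v (par T htree r v) = lab T htree r a₀ v := by
  rw [f, if_pos (adj_par T htree hv).symm, if_neg]
  intro he
  exact exclusive T htree r (adj_par T htree hv) rfl he.symm

lemma f_child {v c : V} (hc : c ∈ children T htree r v) :
    f T htree r a₀ v c = lab T htree r a₀ c := by
  obtain ⟨h1, h2⟩ := (mem_children T htree).mp hc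
  rw [f, if_pos h1, if_pos h2.symm]

lemma Wt_eq {v : V} (hv : v ≠ r) :
    Wt T htree r a₀ v = lab T htree r a₀ v +
      ∑ c ∈ children T htree r v, lab T htree r a₀ c := by
  rw [Wt, neighbor_split T htree hv,
    Finset.sum_insert (par_notmem_children T htree hv), f_par T htree r a₀ hv]
  congr 1
  exact Finset.sum_congr rfl (fun c hc => f_child T htree r a₀ hc)

variable (h5 : 5 ≤ Fintype.card 𝒢) (ha₀ : a₀ ≠ 0) (hleaf : T.neighborFinset r = {c₀})

include h5 ha₀ in
lemma lab_ne_zero : ∀ v : V, v ≠ r → lab T htree r a₀ v ≠ 0 := by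
  have key : ∀ (d : ℕ) (v : V), depth T htree r v = d → v ≠ r → lab T htree r a₀ v ≠ 0 := by
    intro d
    induction d using Nat.strong_induction_on with
    | _ d ih =>
      intro v hd hv
      by_cases hp : par T htree r v = r
      · rw [(lab_top T htree r a₀ hv hp).1]; exact ha₀
      · have hvin : v ∈ children T htree r (par T htree r v) :=
          (mem_children T htree).mpr ⟨adj_par T htree hv, rfl⟩
        have hdp := depth_par T htree hv
        have hlp : lab T htree r a₀ (par T htree r v) ≠ 0 :=
          ih (depth T htree r (par T htree r v)) (by omega) _ rfl hp
        have hspec := CL_spec h5 (children T htree r (par T htree r v)) ⟨v, hvin⟩ hlp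
          ((A T htree r a₀ (par T htree r v)).2)
        rw [(A_gen T htree r a₀ hv hp).1]
        exact (hspec.1 v hvin).1
  intro v
  exact key (depth T htree r v) v rfl

include hleaf in
lemma c0_props : c₀ ≠ r ∧ par T htree r c₀ = r := by
  have hc : c₀ ∈ T.neighborFinset r := by rw [hleaf]; exact Finset.mem_singleton_self c₀
  have hadj : T.Adj r c₀ := (SimpleGraph.mem_neighborFinset T r c₀).mp hc
  refine ⟨hadj.ne', ?_⟩
  rcases dichotomy T htree r hadj with h1 | h1
  · exact h1
  · rw [par_r] at h1
    exact absurd h1 hadj.ne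

include hleaf in
lemma Wt_r : Wt T htree r a₀ r = a₀ := by
  obtain ⟨hne, hpar⟩ := c0_props T htree r c₀ hleaf
  rw [Wt, hleaf, Finset.sum_singleton, f, if_pos, if_pos hpar.symm]
  · exact (lab_top T htree r a₀ hne hpar).1
  · have hc : c₀ ∈ T.neighborFinset r := by rw [hleaf]; exact Finset.mem_singleton_self c₀
    exact (SimpleGraph.mem_neighborFinset T r c₀).mp hc

include hleaf in
lemma A2_eq {v : V} (hv : v ≠ r) :
    (A T htree r a₀ v).2 = Wt T htree r a₀ (par T htree r v) := by
  by_cases hp : par T htree r v = r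
  · rw [(lab_top T htree r a₀ hv hp).2, hp, Wt_r T htree r c₀ a₀ hleaf]
  · rw [(A_gen T htree r a₀ hv hp).2, Wt_eq T htree r a₀ hp]
    congr 1
    refine Finset.sum_congr rfl (fun c hc => ?_)
    have hcr : c ≠ r := children_ne_r T htree hp hc
    have hcp : par T htree r c = par T htree r v := children_par T htree hc
    have := (A_gen T htree r a₀ hcr (by rw [hcp]; exact hp)).1
    rw [this, hcp]

include h5 ha₀ hleaf in
lemma lab_ne_Wpar {v : V} (hv : v ≠ r) (hp : par T htree r v ≠ r) :
    lab T htree r a₀ v ≠ Wt T htree r a₀ (par T htree r v) := by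
  have hvin : v ∈ children T htree r (par T htree r v) :=
    (mem_children T htree).mpr ⟨adj_par T htree hv, rfl⟩
  have hlp : lab T htree r a₀ (par T htree r v) ≠ 0 :=
    lab_ne_zero T htree r a₀ h5 ha₀ _ hp
  have hspec := CL_spec h5 (children T htree r (par T htree r v)) ⟨v, hvin⟩ hlp
    ((A T htree r a₀ (par T htree r v)).2)
  rw [← A2_eq T htree r c₀ a₀ hleaf hv, (A_gen T htree r a₀ hv hp).1,
    (A_gen T htree r a₀ hv hp).2]
  exact (hspec.1 v hvin).2

include h5 ha₀ hleaf in
lemma Wt_props (hord : 3 ≤ Fintype.card V) {v : V} (hv : v ≠ r) :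
    Wt T htree r a₀ v ≠ 0 ∧ Wt T htree r a₀ v ≠ Wt T htree r a₀ (par T htree r v) := by
  by_cases hch : (children T htree r v).Nonempty
  · have hlv : lab T htree r a₀ v ≠ 0 := lab_ne_zero T htree r a₀ h5 ha₀ v hv
    have hspec := CL_spec h5 (children T htree r v) hch hlv ((A T htree r a₀ v).2)
    have hWv : Wt T htree r a₀ v = lab T htree r a₀ v +
        ∑ c ∈ children T htree r v,
          CL (children T htree r v) (lab T htree r a₀ v) ((A T htree r a₀ v).2) c := by
      rw [Wt_eq T htree r a₀ hv]
      congr 1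
      refine Finset.sum_congr rfl (fun c hc => ?_)
      have hcr : c ≠ r := by
        rintro rfl
        obtain ⟨h1, h2⟩ := (mem_children T htree).mp hc
        rw [par_r] at h2
        exact hv h2.symm
      have hcp : par T htree r c = v := children_par T htree hc
      have := (A_gen T htree r a₀ hcr (by rw [hcp]; exact hv)).1
      rw [this, hcp]
    constructor
    · rw [hWv]; exact hspec.2.1
    · rw [hWv, ← A2_eq T htree r c₀ a₀ hleaf hv]; exact hspec.2.2
  · have hWv : Wt T htree r a₀ v = lab T htree r a₀ v := by
      rw [Wt_eq T htree r a₀ hv, Finset.not_nonempty_iff_eq_empty.mp hch,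
        Finset.sum_empty, add_zero]
    by_cases hp : par T htree r v = r
    · exfalso
      have hadjrv : T.Adj r v := hp ▸ adj_par T htree hv
      have hvc : v = c₀ := by
        have hm : v ∈ T.neighborFinset r := (SimpleGraph.mem_neighborFinset T r v).mpr hadjrv
        rw [hleaf] at hm
        simpa using hm
      obtain ⟨u, hu, hur⟩ := exists_second T htree hord hleaf
      apply hch
      refine ⟨u, (mem_children T htree).mpr ⟨hvc ▸ hu, ?_⟩⟩
      rcases dichotomy T htree r hu with h1 | h1
      · rw [hvc]; exact h1
      · rw [(c0_props T htree r c₀ hleaf).2] at h1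
        exact absurd h1.symm hur
    · constructor
      · rw [hWv]; exact lab_ne_zero T htree r a₀ h5 ha₀ v hv
      · rw [hWv]; exact lab_ne_Wpar T htree r c₀ a₀ h5 ha₀ hleaf hv hp

end Main

end Stmt11Tree

/-- For every tree `T` of order `n ≥ 3` and Abelian group `𝒢` of order at
least 5, there is a labeling of the edges of `T` with nonzero elements of `𝒢` such that
adjacent vertices receive distinct weights and no vertex has weight 0. -/
theorem stmt_11 {V : Type} [Fintype V] [DecidableEq V]
    (T : SimpleGraph V) [DecidableRel T.Adj] (htree : T.IsTree)
    (hord : 3 ≤ Fintype.card V)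
    (𝒢 : Type) [AddCommGroup 𝒢] [Fintype 𝒢] (hcard : 5 ≤ Fintype.card 𝒢) :
    ∃ f : V → V → 𝒢,
      (∀ u v, f u v = f v u) ∧
      (∀ u v, T.Adj u v → f u v ≠ 0) ∧
      (∀ u v, T.Adj u v →
        (∑ x ∈ T.neighborFinset u, f u x) ≠ (∑ x ∈ T.neighborFinset v, f v x)) ∧
      (∀ v, (∑ u ∈ T.neighborFinset v, f v u) ≠ 0) := by
  obtain ⟨r, c₀, hleaf⟩ := Stmt11Tree.exists_leaf T htree hord
  obtain ⟨a₀, ha₀, -, -, -⟩ := Stmt11.exists_ne4 hcard 0 0 0 0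
  refine ⟨Stmt11Tree.f T htree r a₀, ?_, ?_, ?_, ?_⟩
  · intro u v
    by_cases h : T.Adj u v
    · rcases Stmt11Tree.dichotomy T htree r h with h1 | h1
      · have h2 : Stmt11Tree.par T htree r u ≠ v := Stmt11Tree.exclusive T htree r h h1
        rw [Stmt11Tree.f, Stmt11Tree.f, if_pos h, if_pos h.symm, if_pos h1.symm,
          if_neg (fun e => h2 e.symm)]
      · have h2 : Stmt11Tree.par T htree r v ≠ u := Stmt11Tree.exclusive T htree r h.symm h1
        rw [Stmt11Tree.f, Stmt11Tree.f, if_pos h, if_pos h.symm,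
          if_neg (fun e => h2 e.symm), if_pos h1.symm]
    · rw [Stmt11Tree.f, Stmt11Tree.f, if_neg h, if_neg (fun h' => h h'.symm)]
  · intro u v h
    rcases Stmt11Tree.dichotomy T htree r h with h1 | h1
    · have hv : v ≠ r := by
        rintro rfl
        rw [Stmt11Tree.par_r] at h1
        exact h.ne' h1
      rw [Stmt11Tree.f, if_pos h, if_pos h1.symm]
      exact Stmt11Tree.lab_ne_zero T htree r a₀ hcard ha₀ v hv
    · have hu : u ≠ r := by
        rintro rfl
        rw [Stmt11Tree.par_r] at h1
        exact h.ne h1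
      have h2 : Stmt11Tree.par T htree r v ≠ u := Stmt11Tree.exclusive T htree r h.symm h1
      rw [Stmt11Tree.f, if_pos h, if_neg (fun e => h2 e.symm)]
      exact Stmt11Tree.lab_ne_zero T htree r a₀ hcard ha₀ u hu
  · intro u v h
    show Stmt11Tree.Wt T htree r a₀ u ≠ Stmt11Tree.Wt T htree r a₀ v
    rcases Stmt11Tree.dichotomy T htree r h with h1 | h1
    · have hv : v ≠ r := by
        rintro rfl
        rw [Stmt11Tree.par_r] at h1
        exact h.ne' h1
      have h2 := (Stmt11Tree.Wt_props T htree r c₀ a₀ hcard ha₀ hleaf hord hv).2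
      rw [h1] at h2
      exact h2.symm
    · have hu : u ≠ r := by
        rintro rfl
        rw [Stmt11Tree.par_r] at h1
        exact h.ne h1
      have h2 := (Stmt11Tree.Wt_props T htree r c₀ a₀ hcard ha₀ hleaf hord hu).2
      rw [h1] at h2
      exact h2
  · intro v
    show Stmt11Tree.Wt T htree r a₀ v ≠ 0
    by_cases hv : v = r
    · rw [hv, Stmt11Tree.Wt_r T htree r c₀ a₀ hleaf]
      exact ha₀
    · exact (Stmt11Tree.Wt_props T htree r c₀ a₀ hcard ha₀ hleaf hord hv).1
end
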